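/- Let H be a finite bipartite graph and let G be the complement of H. Then every complete expansion 𝕂[G] of G (with arbitrary positive clique sizes m_v) is k-indicated colorable for every integer k ≥ χ(𝕂[G]). -/

import Mathlib

open SimpleGraph
open scoped Classical

/-- The lexicographic product `G[H]`. -/
def lexProd {α β : Type*} (G : SimpleGraph α) (H : SimpleGraph β) :
    SimpleGraph (α × β) where
  Adj x y := G.Adj x.1 y.1 ∨ (x.1 = y.1 ∧ H.Adj x.2 y.2)
  symm := ⟨by
    rintro x y (h | ⟨h1, h2⟩)
    · exact Or.inl h.symm
    · exact Or.inr ⟨h1.symm, h2.symm⟩⟩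
  loopless := ⟨by
    rintro x (h | ⟨-, h2⟩)
    · exact G.loopless.irrefl _ h
    · exact H.loopless.irrefl _ h2⟩

/-- `AnnWins G k c`: starting from the partial proper coloring `c`, Ann (who presents
uncolored vertices one at a time) has a strategy so that Ben (who properly colors each
presented vertex with one of `k` colors) can always move, and the whole graph gets colored. -/
inductive AnnWins {V : Type*} (G : SimpleGraph V) (k : ℕ) :
    (V → Option (Fin k)) → Prop
  | done (c : V → Option (Fin k)) (h : ∀ v, (c v).isSome) : AnnWins G k c
  | step (c : V → Option (Fin k)) (v : V) (hv : c v = none)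
      (hex : ∃ col : Fin k, ∀ u, G.Adj u v → c u ≠ some col)
      (h : ∀ col : Fin k, (∀ u, G.Adj u v → c u ≠ some col) →
        AnnWins G k (Function.update c v (some col))) : AnnWins G k c

/-- A graph is `k`-indicated colorable if Ann wins the indicated coloring game
with `k` colors starting from the empty coloring. -/
def IndicatedColorable {V : Type*} (G : SimpleGraph V) (k : ℕ) : Prop :=
  AnnWins G k (fun _ => none)

/-- The indicated chromatic number `χᵢ(G)`. -/
noncomputable def indicatedChromaticNumber {V : Type*} (G : SimpleGraph V) : ℕ :=
  sInf {k | IndicatedColorable G k}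

/-- The coloring number `col(G)`: the least `d` such that every nonempty set `S` of
vertices contains a vertex with fewer than `d` neighbours in `S`. -/
noncomputable def coloringNumber {V : Type*} (G : SimpleGraph V) : ℕ :=
  sInf {d : ℕ | ∀ S : Set V, S.Nonempty → ∃ v ∈ S, {u ∈ S | G.Adj v u}.ncard < d}

/-- `F`-freeness: no induced subgraph of `G` is isomorphic to `F`. -/
def IsFreeOf {α β : Type*} (F : SimpleGraph α) (G : SimpleGraph β) : Prop :=
  IsEmpty (F ↪g G)

/-- The complete expansion of `G`, replacing each vertex `v` by a clique on `m v` vertices. -/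
def completeExpansion {V : Type*} (G : SimpleGraph V) (m : V → ℕ) :
    SimpleGraph (Σ v, Fin (m v)) where
  Adj x y := G.Adj x.1 y.1 ∨ (x.1 = y.1 ∧ x ≠ y)
  symm := ⟨by
    rintro x y (h | ⟨h1, h2⟩)
    · exact Or.inl h.symm
    · exact Or.inr ⟨h1.symm, h2.symm⟩⟩
  loopless := ⟨by
    rintro x (h | ⟨-, h2⟩)
    · exact G.loopless.irrefl _ h
    · exact h2 rfl⟩

/-- The independent expansion of `G`, replacing each vertex `v` by an independent
set of `m v` vertices. -/
def independentExpansion {V : Type*} (G : SimpleGraph V) (m : V → ℕ) :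
    SimpleGraph (Σ v, Fin (m v)) where
  Adj x y := G.Adj x.1 y.1
  symm := ⟨fun _ _ h => h.symm⟩
  loopless := ⟨fun _ h => G.loopless.irrefl _ h⟩

/-!
The complement of `𝕂[Hᶜ]` is again bipartite, so its vertex set splits into two cliques `A`
and `B`. Ann first presents the vertices of `A`. While the colored vertices form a properly
colored clique, every color missing from the lists of a clique `S` of uncolored vertices is
carried by a colored vertex adjacent to all of `S`; these vertices and `S` form a clique, so
`k ≥ χ` yields Hall's condition for the lists of `S`. Once `A` is colored, the remaining
vertices therefore satisfy Hall's condition, and Ann presents a vertex of a minimal tight set,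
i.e. a minimal nonempty set whose lists together hold exactly as many colors as it has
vertices (any vertex if there is none): whichever color Ben chooses, Hall's condition
survives, so Ben always has a color available.
-/

open Finset

section Hall

variable {X Y : Type*} [DecidableEq Y] {ν : X → Finset Y} {U : Finset X}

def HallCondition (ν : X → Finset Y) (U : Finset X) : Prop :=
  ∀ S ⊆ U, #S ≤ #(S.biUnion ν)

theorem HallCondition.mono {ν' : X → Finset Y} (h : HallCondition ν U)
    (hν : ∀ x ∈ U, ν x ⊆ ν' x) : HallCondition ν' U :=
  fun S hS => (h S hS).trans (card_le_card (biUnion_mono fun x hx => hν x (hS hx)))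

variable [DecidableEq X]

theorem HallCondition.card_biUnion_inter_le (h : HallCondition ν U) {S T : Finset X}
    (hS : S ⊆ U) (hT : T ⊆ U) (hStight : #(S.biUnion ν) = #S)
    (hTtight : #(T.biUnion ν) = #T) :
    #(S.biUnion ν ∩ T.biUnion ν) ≤ #(S ∩ T) := by
  have hunion : #(S ∪ T) ≤ #(S.biUnion ν ∪ T.biUnion ν) := by
    rw [← union_biUnion]
    exact h _ (union_subset hS hT)
  have := card_union_add_card_inter S T
  have := card_union_add_card_inter (S.biUnion ν) (T.biUnion ν)
  omega

/- A set `S ⊆ U.erase b` violating the new condition would be tight with `y` among its colors.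
By submodularity `S ∩ S₀` is then tight as well; it is nonempty because `y` is a color of both
`S` and `S₀`, and it is smaller than `S₀` because `b ∉ S`. -/
theorem HallCondition.erase_of_mem_minimal_tight (h : HallCondition ν U) {S₀ : Finset X}
    (hS₀ : S₀ ⊆ U) (htight : #(S₀.biUnion ν) = #S₀)
    (hmin : ∀ T ⊆ U, T.Nonempty → #(T.biUnion ν) = #T → #S₀ ≤ #T) {b : X}
    (hb : b ∈ S₀) :
    ∀ y ∈ ν b, HallCondition (fun x => (ν x).erase y) (U.erase b) := by
  intro y hy S hS
  rw [← erase_biUnion]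
  have hSU : S ⊆ U := hS.trans (erase_subset _ _)
  have hbS : b ∉ S := fun hbS => (mem_erase.1 (hS hbS)).1 rfl
  by_contra! hlt
  have hyS : y ∈ S.biUnion ν := by
    by_contra hyS
    rw [erase_eq_of_notMem hyS] at hlt
    exact (h S hSU).not_gt hlt
  have hStight : #(S.biUnion ν) = #S := by
    have := card_erase_of_mem hyS
    have := h S hSU
    omega
  have hinter := h.card_biUnion_inter_le hSU hS₀ hStight htight
  rcases (S ∩ S₀).eq_empty_or_nonempty with hempty | hne
  · have hcommon : y ∈ S.biUnion ν ∩ S₀.biUnion ν :=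
      mem_inter.2 ⟨hyS, mem_biUnion.2 ⟨b, hb, hy⟩⟩
    rw [hempty, card_empty, Nat.le_zero, card_eq_zero] at hinter
    simp [hinter] at hcommon
  · have hsub : (S ∩ S₀).biUnion ν ⊆ S.biUnion ν ∩ S₀.biUnion ν :=
      subset_inter (biUnion_subset_biUnion_of_subset_left _ inter_subset_left)
        (biUnion_subset_biUnion_of_subset_left _ inter_subset_right)
    have hle := card_le_card hsub
    have hge := h (S ∩ S₀) (inter_subset_left.trans hSU)
    have hmin' := hmin (S ∩ S₀) (inter_subset_left.trans hSU) hne (by omega)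
    have hlt' := card_lt_card ((ssubset_iff_of_subset inter_subset_right).2
      ⟨b, hb, fun hb' => hbS (mem_inter.1 hb').1⟩)
    omega

theorem HallCondition.exists_mem_forall_erase (h : HallCondition ν U) (hU : U.Nonempty) :
    ∃ b ∈ U, ∀ y ∈ ν b, HallCondition (fun x => (ν x).erase y) (U.erase b) := by
  by_cases htight : ∃ S ⊆ U, S.Nonempty ∧ #(S.biUnion ν) = #S
  · obtain ⟨S₀, hS₀, hmin⟩ := exists_min_image
      (U.powerset.filter fun S => S.Nonempty ∧ #(S.biUnion ν) = #S) card
      (by simpa only [filter_nonempty_iff, mem_powerset] using htight)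
    simp only [mem_filter, mem_powerset, and_imp] at hS₀ hmin
    obtain ⟨hS₀U, ⟨b, hb⟩, hS₀tight⟩ := hS₀
    exact ⟨b, hS₀U hb, h.erase_of_mem_minimal_tight hS₀U hS₀tight hmin hb⟩
  · push Not at htight
    obtain ⟨b, hb⟩ := hU
    refine ⟨b, hb, fun y _ S hS => ?_⟩
    rcases S.eq_empty_or_nonempty with rfl | hne
    · simp
    have hSU : S ⊆ U := hS.trans (erase_subset _ _)
    have := htight S hSU hne
    have := h S hSU
    have := pred_card_le_card_erase (s := S.biUnion ν) (a := y)
    rw [← erase_biUnion]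
    omega

end Hall

section IndicatedGame

variable {W : Type*} {G : SimpleGraph W} {k : ℕ}

noncomputable def availableColors (G : SimpleGraph W) (c : W → Option (Fin k)) (v : W) :
    Finset (Fin k) :=
  {col | ∀ u, G.Adj u v → c u ≠ some col}

@[simp]
theorem mem_availableColors {c : W → Option (Fin k)} {v : W} {col : Fin k} :
    col ∈ availableColors G c v ↔ ∀ u, G.Adj u v → c u ≠ some col := by
  simp [availableColors]

theorem erase_availableColors_subset_update (c : W → Option (Fin k)) (v w : W) (col : Fin k) :
    (availableColors G c v).erase col ⊆ availableColors G (Function.update c w (some col)) v := by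
  intro col' h
  rw [mem_erase, mem_availableColors] at h
  rw [mem_availableColors]
  intro u hu
  rcases eq_or_ne u w with rfl | hne
  · simpa [Function.update_self] using h.1.symm
  · rw [Function.update_of_ne hne]
    exact h.2 u hu

def IsProperPartialColoring (G : SimpleGraph W) (c : W → Option (Fin k)) : Prop :=
  ∀ ⦃u v⦄, G.Adj u v → c u ≠ none → c u ≠ c v

theorem IsProperPartialColoring.update {c : W → Option (Fin k)}
    (hc : IsProperPartialColoring G c) {v : W} {col : Fin k}
    (hcol : col ∈ availableColors G c v) :
    IsProperPartialColoring G (Function.update c v (some col)) := by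
  rw [mem_availableColors] at hcol
  intro u w huw hu
  rcases eq_or_ne u v with rfl | huv
  · rw [Function.update_self, Function.update_of_ne huw.ne.symm]
    exact fun h => hcol w huw.symm h.symm
  · rw [Function.update_of_ne huv] at hu ⊢
    rcases eq_or_ne w v with rfl | hwv
    · rw [Function.update_self]
      exact hcol u huw
    · rw [Function.update_of_ne hwv]
      exact hc huw hu

variable [Fintype W]

noncomputable def uncolored (c : W → Option (Fin k)) : Finset W := {v | c v = none}

theorem uncolored_update_some (c : W → Option (Fin k)) (v : W) (col : Fin k) :
    uncolored (Function.update c v (some col)) = (uncolored c).erase v := by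
  ext u
  rcases eq_or_ne u v with rfl | huv <;> simp [uncolored, Function.update_of_ne, *]

theorem annWins_of_invariant (P : (W → Option (Fin k)) → Prop)
    (hstep : ∀ c, P c → (uncolored c).Nonempty → ∃ v ∈ uncolored c,
      (availableColors G c v).Nonempty ∧
        ∀ col ∈ availableColors G c v, P (Function.update c v (some col)))
    {c : W → Option (Fin k)} (hc : P c) : AnnWins G k c := by
  induction hn : #(uncolored c) generalizing c with
  | zero =>
    refine .done c fun v => ?_
    rw [card_eq_zero, eq_empty_iff_forall_notMem] at hn
    simpa [uncolored, Option.isSome_iff_ne_none] using hn v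
  | succ n ih =>
    obtain ⟨v, hv, ⟨col₀, hcol₀⟩, hP⟩ := hstep c hc (card_pos.1 (by omega))
    refine .step c v (by simpa [uncolored] using hv) ⟨col₀, by simpa using hcol₀⟩
      fun col hcol => ih (hP col (mem_availableColors.2 hcol)) ?_
    rw [uncolored_update_some, card_erase_of_mem hv, hn, Nat.add_sub_cancel]

theorem exists_step_of_hallCondition {c : W → Option (Fin k)}
    (h : HallCondition (availableColors G c) (uncolored c)) (hne : (uncolored c).Nonempty) :
    ∃ v ∈ uncolored c, (availableColors G c v).Nonempty ∧
      ∀ col ∈ availableColors G c v, HallCondition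
        (availableColors G (Function.update c v (some col)))
        (uncolored (Function.update c v (some col))) := by
  obtain ⟨b, hb, hhall⟩ := h.exists_mem_forall_erase hne
  refine ⟨b, hb, ?_, fun col hcol => ?_⟩
  · simpa [card_pos] using h {b} (singleton_subset_iff.2 hb)
  · rw [uncolored_update_some]
    exact (hhall col hcol).mono fun v _ => erase_availableColors_subset_update c v b col

theorem hallCondition_availableColors_of_isClique (hk : G.Colorable k) {c : W → Option (Fin k)}
    (hc : IsProperPartialColoring G c) (hcolored : G.IsClique {v | c v ≠ none})
    {U : Finset W} (hU : G.IsClique (U : Set W)) (hUc : U ⊆ uncolored c) :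
    HallCondition (availableColors G c) U := by
  intro S hS
  rcases S.eq_empty_or_nonempty with rfl | ⟨b₀, hb₀⟩
  · simp
  set N := S.biUnion (availableColors G c)
  let R : Finset W := {u | c u ≠ none ∧ ∀ b ∈ S, G.Adj u b}
  have hSc : ∀ b ∈ S, c b = none := fun b hb => by simpa [uncolored] using hUc (hS hb)
  have hclique : G.IsClique ((S ∪ R : Finset W) : Set W) := by
    intro x hx y hy hxy
    simp only [R, coe_union, coe_filter, Set.mem_union, mem_coe, mem_univ, true_and,
      Set.mem_ofPred_eq] at hx hy
    rcases hx with hx | hx <;> rcases hy with hy | hy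
    · exact hU (hS hx) (hS hy) hxy
    · exact (hy.2 x hx).symm
    · exact hx.2 y hy
    · exact hcolored hx.1 hy.1 hxy
  have hdisj : Disjoint S R := disjoint_left.2 fun b hb hbR => (mem_filter.1 hbR).2.1 (hSc b hb)
  have hcarried : Nᶜ.image some ⊆ R.image c := by
    intro o ho
    obtain ⟨col, hcol, rfl⟩ := mem_image.1 ho
    have hblocked : ∀ b ∈ S, ∃ u, G.Adj u b ∧ c u = some col := by
      simpa [N] using hcol
    obtain ⟨u, hub₀, hu⟩ := hblocked b₀ hb₀
    refine mem_image.2 ⟨u, mem_filter.2 ⟨mem_univ _, by simp [hu], fun b hb => ?_⟩, hu⟩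
    obtain ⟨u', hu'b, hu'⟩ := hblocked b hb
    obtain rfl : u = u' := by
      by_contra hne
      exact hc (hcolored (by simp [hu]) (by simp [hu']) hne) (by simp [hu]) (hu.trans hu'.symm)
    exact hu'b
  have hSR := hclique.card_le_of_colorable hk
  rw [card_union_of_disjoint hdisj] at hSR
  have hNR := (card_le_card hcarried).trans card_image_le
  rw [card_image_of_injective _ (Option.some_injective _), card_compl, Fintype.card_fin] at hNR
  omega

theorem indicatedColorable_of_colorable_compl (hG : Gᶜ.Colorable 2) (hk : G.Colorable k) :
    IndicatedColorable G k := by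
  obtain ⟨φ⟩ := hG
  have hside : ∀ i, G.IsClique {v | φ v = i} := fun i u hu v hv huv => by
    by_contra h
    exact φ.valid ⟨huv, h⟩ (hu.trans hv.symm)
  let P : (W → Option (Fin k)) → Prop := fun c =>
    (IsProperPartialColoring G c ∧ ∀ v, c v ≠ none → φ v = 0) ∨
      HallCondition (availableColors G c) (uncolored c)
  have hall_step : ∀ c, HallCondition (availableColors G c) (uncolored c) →
      (uncolored c).Nonempty → ∃ v ∈ uncolored c, (availableColors G c v).Nonempty ∧
        ∀ col ∈ availableColors G c v, P (Function.update c v (some col)) :=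
    fun c h hne => (exists_step_of_hallCondition h hne).imp
      fun v ⟨hv, hne, hs⟩ => ⟨hv, hne, fun col hcol => Or.inr (hs col hcol)⟩
  refine annWins_of_invariant P ?_
    (Or.inl ⟨fun _ _ _ h => absurd rfl h, fun _ h => absurd rfl h⟩)
  rintro c (⟨hc, hc0⟩ | hhall) hne
  · have hcolored : G.IsClique {v | c v ≠ none} := (hside 0).subset hc0
    by_cases hA : ∃ a ∈ uncolored c, φ a = 0
    · obtain ⟨a, ha, ha0⟩ := hA
      refine ⟨a, ha, ?_, fun col hcol => Or.inl ⟨hc.update hcol, fun v hv => ?_⟩⟩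
      · simpa [card_pos] using hallCondition_availableColors_of_isClique hk hc hcolored
          (by simp) (singleton_subset_iff.2 ha) {a} subset_rfl
      · rcases eq_or_ne v a with rfl | hva
        · exact ha0
        · rw [Function.update_of_ne hva] at hv
          exact hc0 v hv
    · push Not at hA
      have hB : G.IsClique (uncolored c : Set W) :=
        (hside 1).subset fun v hv => Fin.eq_one_of_ne_zero _ (hA v hv)
      exact hall_step c
        (hallCondition_availableColors_of_isClique hk hc hcolored hB subset_rfl) hne
  · exact hall_step c hhall hne

end IndicatedGame

theorem SimpleGraph.Colorable.compl_completeExpansion {V : Type*} {G : SimpleGraph V} {n : ℕ}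
    (h : Gᶜ.Colorable n) (m : V → ℕ) : (completeExpansion G m)ᶜ.Colorable n :=
  h.of_hom (G' := Gᶜ) ⟨Sigma.fst, fun {_ _} ⟨hne, hadj⟩ =>
    ⟨fun heq => hadj (Or.inr ⟨heq, hne⟩), fun h => hadj (Or.inl h)⟩⟩

theorem completeExpansion_complBipartite_indicatedColorable_general
    {V : Type*} [Fintype V] (H : SimpleGraph V) (hH : H.Colorable 2)
    (m : V → ℕ) (k : ℕ)
    (hk : (completeExpansion Hᶜ m).chromaticNumber ≤ k) :
    IndicatedColorable (completeExpansion Hᶜ m) k :=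
  indicatedColorable_of_colorable_compl
    (Colorable.compl_completeExpansion (by rwa [compl_compl]) m)
    (chromaticNumber_le_iff_colorable.mp hk)

/-- If `G` is the complement of a bipartite graph, then every complete expansion `𝕂[G]`
of `G` is `k`-indicated colorable for every `k ≥ χ(𝕂[G])`. -/
theorem completeExpansion_complBipartite_indicatedColorable
    {V : Type*} [Fintype V] (H : SimpleGraph V) (hH : H.Colorable 2)
    (m : V → ℕ) (hm : ∀ v, 0 < m v) (k : ℕ)
    (hk : (completeExpansion Hᶜ m).chromaticNumber ≤ k) :
    IndicatedColorable (completeExpansion Hᶜ m) k :=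
  completeExpansion_complBipartite_indicatedColorable_general H hH m k hk
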